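/- Let A be a clone over ℕ, B a right A-algebra, and Λ : B → B an abstract binding operation on x_1. Then: (1) for every n ≥ 1, if b ∈ B has rank n then Λb has rank n−1 (i.e. Λ(F_n(B)) ⊆ F_{n−1}(B)); (2) if b ∈ B has rank 0 then Λb has rank 0 (i.e. Λ(F_0(B)) ⊆ F_0(B)); (3) if b ∈ B has finite rank i ≥ 1 then Λ^i b (the i-fold iterate of Λ applied to b) is closed, i.e. has rank 0. -/
import Mathlib


/-- A clone over the positive integers ℕ = {1,2,3,…}. -/
structure CloneN (A : Type*) where
  sub : A → (ℕ+ → A) → A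
  x : ℕ+ → A
  sub_assoc : ∀ (a : A) (f g : ℕ+ → A), sub (sub a f) g = sub a (fun i => sub (f i) g)
  sub_x : ∀ a : A, sub a x = a
  x_sub : ∀ (i : ℕ+) (f : ℕ+ → A), sub (x i) f = f i

/-- A right algebra of a clone over ℕ. -/
structure RightAlgOn (A : Type*) (C : CloneN A) (B : Type*) where
  act : B → (ℕ+ → A) → B
  act_act : ∀ (b : B) (f g : ℕ+ → A), act (act b f) g = act b (fun i => C.sub (f i) g)
  act_x : ∀ b : B, act b C.x = b

/-- An element of a right algebra has rank `n`. -/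
def RightAlgOn.HasRank {A B : Type*} {C : CloneN A} (R : RightAlgOn A C B) :
    ℕ → B → Prop
  | 0, b => R.act b (fun _ => C.x 1) = b ∧ R.act b (fun _ => C.x 2) = b
  | n + 1, b => R.act b (fun i => C.x (min i ⟨n + 1, Nat.succ_pos n⟩)) = b

/-- `Λ : B → B` is an abstract binding operation on `x_1`:
`(Λb)[f] = Λ(b[g])` where `g(1) = x_1` and `g(j+1) = (f j)⁺`, with
`t⁺ = t[x_2,x_3,…]`. -/
def IsAbsBinding1 {A B : Type*} (C : CloneN A) (R : RightAlgOn A C B)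
    (L : B → B) : Prop :=
  ∀ (b : B) (f : ℕ+ → A),
    R.act (L b) f = L (R.act b (fun j =>
      if j = 1 then C.x 1 else C.sub (f (j - 1)) (fun k => C.x (k + 1))))

/-- For `Λ` an abstract binding operation on `x_1`: if `b` has rank `n ≥ 1` then `Λb`
has rank `n−1`; if `b` has rank `0` then so does `Λb`; and if `b` has rank `i ≥ 1`
then the `i`-fold iterate `Λ^i b` is closed (has rank `0`). -/
theorem abs_binding_decreases_rank {A B : Type*} (C : CloneN A)
    (R : RightAlgOn A C B) (L : B → B) (hL : IsAbsBinding1 C R L) :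
    (∀ (n : ℕ) (b : B), R.HasRank (n + 1) b → R.HasRank n (L b)) ∧
    (∀ b : B, R.HasRank 0 b → R.HasRank 0 (L b)) ∧
    (∀ (i : ℕ) (b : B), 1 ≤ i → R.HasRank i b → R.HasRank 0 (L^[i] b)) := by
  have hmin : ∀ a b : ℕ+, ((min a b : ℕ+) : ℕ) = min (a : ℕ) (b : ℕ) :=
    fun a b => Monotone.map_min (fun _ _ h => (PNat.coe_le_coe _ _).mpr h)
  have fix1 : ∀ (b : B), R.act b (fun _ => C.x 1) = b →
      ∀ g : ℕ+ → A, g 1 = C.x 1 → R.act b g = b := by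
    intro b hb g hg
    conv_lhs => rw [← hb]
    rw [R.act_act]
    have : (fun _ : ℕ+ => C.sub (C.x 1) g) = (fun _ : ℕ+ => C.x 1) := by
      funext i; rw [C.x_sub, hg]
    rw [this, hb]
  have p1 : ∀ (n : ℕ) (b : B), R.HasRank (n + 1) b → R.HasRank n (L b) := by
    intro n b hb
    match n with
    | 0 =>
      simp only [RightAlgOn.HasRank] at hb ⊢
      have hb1 : R.act b (fun _ => C.x 1) = b := by
        have he : (fun i : ℕ+ => C.x (min i ⟨0 + 1, Nat.succ_pos 0⟩)) =
            fun _ : ℕ+ => C.x 1 := by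
          funext i; congr 1
          apply PNat.coe_injective
          rw [hmin i ⟨0 + 1, Nat.succ_pos 0⟩]
          have h6 : 0 < (i : ℕ) := i.2
          show (i : ℕ) ⊓ 1 = 1
          omega
        rwa [he] at hb
      constructor <;>
      · rw [hL]
        congr 1
        apply fix1 b hb1
        simp
    | Nat.succ m =>
      simp only [RightAlgOn.HasRank] at hb ⊢
      rw [hL]
      congr 1
      have he : (fun j : ℕ+ => if j = 1 then C.x 1 else
          C.sub (C.x (min (j - 1) ⟨m + 1, Nat.succ_pos m⟩)) (fun k => C.x (k + 1)))
          = fun i : ℕ+ => C.x (min i ⟨m + 1 + 1, Nat.succ_pos (m + 1)⟩) := by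
        funext j
        by_cases hj : j = 1
        · subst hj
          rw [if_pos rfl]
          congr 1
        · rw [if_neg hj, C.x_sub]
          congr 1
          have hj' : 1 < j := lt_of_le_of_ne j.one_le (Ne.symm hj)
          apply PNat.coe_injective
          have h1 := hmin (j - 1) ⟨m + 1, Nat.succ_pos m⟩
          have h2 := hmin j ⟨m + 1 + 1, Nat.succ_pos (m + 1)⟩
          have h3 : ((j - 1 : ℕ+) : ℕ) = (j : ℕ) - 1 := by
            rw [PNat.sub_coe, if_pos hj', PNat.one_coe]
          have h4 : (1 : ℕ) < (j : ℕ) := hj'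
          rw [PNat.add_coe, h1, h2, h3]
          show ((j : ℕ) - 1) ⊓ (m + 1) + ((1 : ℕ+) : ℕ) = (j : ℕ) ⊓ (m + 2)
          rw [PNat.one_coe]
          omega
      rw [he, hb]
  refine ⟨p1, ?_, ?_⟩
  · intro b hb
    obtain ⟨h1, _⟩ := hb
    constructor <;>
    · rw [hL]
      congr 1
      apply fix1 b h1
      simp
  · intro i
    induction i with
    | zero => omega
    | succ k ih =>
      intro b _ hb
      rcases Nat.eq_zero_or_pos k with hk | hk
      · subst hk
        simpa using p1 0 b hb
      · rw [Function.iterate_succ_apply]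
        exact ih (L b) hk (p1 k b hb)
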